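/- Let r be a positive integer and let a be an integer coprime to r. Then the ring endomorphism of Z[X]/(X^r − 1) induced by X ↦ X^a is an automorphism, and it maps the ideal generated by (the image of) Ψ_r(X) onto itself. -/

import Mathlib

/-!
In `A[X] / (X ^ r - 1)` the class of `X` is a unit whose order divides `r`, so for every integer
`a` the substitution `X ↦ X ^ a` is a well-defined algebra endomorphism depending only on
`a mod r`, and composing two substitutions multiplies the exponents. Hence `X ↦ X ^ a` is an
automorphism, with inverse `X ↦ X ^ b`, as soon as `a * b ≡ 1 [ZMOD r]`.

Over `ℤ`, `Ψ_r = ∏_{d ∣ r, d < r} Φ_d`, and `Φ_d ∣ Φ_d(X ^ n)` for `n` coprime to `d`, because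
`ζ ^ n` is again a primitive `d`-th root of unity whenever `ζ` is one. Taking for `n` a natural
representative of `a` or `b` modulo `r`, both the automorphism and its inverse map the ideal
`(Ψ_r)` into itself.
-/

open Polynomial

noncomputable section

/-- `Ψ_r(X) := (X^r − 1)/Φ_r(X) ∈ ℤ[X]`. -/
def PsiPoly (r : ℕ) : ℤ[X] := (X ^ r - 1) /ₘ cyclotomic r ℤ

theorem Polynomial.cyclotomic_dvd_expand_of_coprime {d c : ℕ} (hc : c.Coprime d) :
    cyclotomic d ℤ ∣ expand ℤ c (cyclotomic d ℤ) := by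
  rcases d.eq_zero_or_pos with rfl | hd
  · simp
  obtain ⟨ζ, hζ⟩ : ∃ ζ : ℂ, IsPrimitiveRoot ζ d := ⟨_, Complex.isPrimitiveRoot_exp d hd.ne'⟩
  rw [cyclotomic_eq_minpoly hζ hd]
  refine minpoly.isIntegrallyClosed_dvd (hζ.isIntegral hd) ?_
  rw [expand_aeval, ← cyclotomic_eq_minpoly hζ hd, aeval_def, eval₂_eq_eval_map, map_cyclotomic]
  exact (hζ.pow_of_coprime c hc).isRoot_cyclotomic hd

theorem psiPoly_eq_prod_cyclotomic {r : ℕ} (hr : 0 < r) :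
    PsiPoly r = ∏ d ∈ r.properDivisors, cyclotomic d ℤ := by
  rw [PsiPoly, ← prod_cyclotomic_eq_X_pow_sub_one hr, ← Nat.cons_self_properDivisors hr.ne',
    Finset.prod_cons, mul_divByMonic_cancel_left _ (cyclotomic.monic r ℤ)]

theorem psiPoly_dvd_expand {r c : ℕ} (hr : 0 < r) (hc : c.Coprime r) :
    PsiPoly r ∣ expand ℤ c (PsiPoly r) := by
  rw [psiPoly_eq_prod_cyclotomic hr, map_prod]
  exact Finset.prod_dvd_prod_of_dvd _ _ fun d hd =>
    cyclotomic_dvd_expand_of_coprime (hc.coprime_dvd_right (Nat.mem_properDivisors.1 hd).1)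

theorem Int.isCoprime_of_mul_modEq_one {a b n : ℤ} (h : a * b ≡ 1 [ZMOD n]) :
    IsCoprime a n := by
  obtain ⟨k, hk⟩ := h.symm.dvd
  exact ⟨b, -k, by linear_combination hk⟩

theorem Int.exists_natCast_coprime_modEq {a : ℤ} {r : ℕ} (ha : IsCoprime a r) (hr : r ≠ 0) :
    ∃ n : ℕ, n.Coprime r ∧ (n : ℤ) ≡ a [ZMOD r] := by
  have h0 : 0 ≤ a % r := Int.emod_nonneg a (by exact_mod_cast hr)
  refine ⟨(a % r).toNat, ?_, ?_⟩
  · rw [← Nat.isCoprime_iff_coprime, Int.toNat_of_nonneg h0, Int.isCoprime_iff_gcd_eq_one,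
      Int.gcd_emod, ← Int.isCoprime_iff_gcd_eq_one]
    exact ha
  · rw [Int.toNat_of_nonneg h0]
    exact Int.mod_modEq a r

theorem Ideal.map_span_singleton_le_self {R F : Type*} [CommSemiring R] [FunLike F R R]
    [RingHomClass F R R] (f : F) {x : R} (h : x ∣ f x) :
    (Ideal.span {x}).map f ≤ Ideal.span {x} := by
  rw [Ideal.map_span, Set.image_singleton, Ideal.span_singleton_le_span_singleton]
  exact h

theorem Ideal.map_eq_self_of_map_le {R : Type*} [Semiring R] {I : Ideal R} (σ : R ≃+* R)
    (h : I.map (σ : R →+* R) ≤ I) (h_symm : I.map (σ.symm : R →+* R) ≤ I) :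
    I.map (σ : R →+* R) = I := by
  refine le_antisymm h ?_
  rwa [Ideal.map_comap_of_equiv, ← Ideal.map_le_iff_le_comap]

namespace XPowSubOne

variable {A : Type*} [CommRing A] {r : ℕ}

local notation "𝓘" => Ideal.span {(X : A[X]) ^ r - 1}
local notation "𝓡" => A[X] ⧸ 𝓘

theorem mk_X_pow_eq_one : Ideal.Quotient.mk 𝓘 X ^ r = 1 := by
  rw [← map_pow, ← sub_eq_zero, ← map_one (Ideal.Quotient.mk 𝓘), ← map_sub,
    Ideal.Quotient.eq_zero_iff_mem]
  exact Ideal.mem_span_singleton_self _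

variable (A) in
def unitX (hr : r ≠ 0) : 𝓡ˣ := Units.ofPowEqOne _ r mk_X_pow_eq_one hr

@[simp]
theorem val_unitX (hr : r ≠ 0) : (unitX A hr : 𝓡) = Ideal.Quotient.mk 𝓘 X := rfl

theorem unitX_pow_eq_one (hr : r ≠ 0) : unitX A hr ^ r = 1 := Units.pow_ofPowEqOne _ hr

theorem unitX_zpow_congr (hr : r ≠ 0) {a b : ℤ} (h : a ≡ b [ZMOD r]) :
    unitX A hr ^ a = unitX A hr ^ b := by
  rw [zpow_eq_zpow_iff_modEq]
  exact h.of_dvd (Int.natCast_dvd_natCast.2 (orderOf_dvd_of_pow_eq_one (unitX_pow_eq_one hr)))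

variable (A) in
/-- The substitution `X ↦ X ^ a`. -/
def powHom (hr : r ≠ 0) (a : ℤ) : 𝓡 →ₐ[A] 𝓡 :=
  Ideal.Quotient.liftₐ 𝓘 (aeval (↑(unitX A hr ^ a) : 𝓡)) fun p hp => by
    obtain ⟨q, rfl⟩ := Ideal.mem_span_singleton'.1 hp
    have h_pow : (unitX A hr ^ a) ^ r = 1 := by
      rw [← zpow_natCast, ← zpow_mul, mul_comm, zpow_mul, zpow_natCast, unitX_pow_eq_one, one_zpow]
    rw [map_mul, map_sub, map_pow, aeval_X, map_one, ← Units.val_pow_eq_pow_val, h_pow,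
      Units.val_one, sub_self, mul_zero]

theorem powHom_mk (hr : r ≠ 0) (a : ℤ) (p : A[X]) :
    powHom A hr a (Ideal.Quotient.mk 𝓘 p) = aeval (↑(unitX A hr ^ a) : 𝓡) p :=
  rfl

theorem powHom_mk_X (hr : r ≠ 0) (a : ℤ) :
    powHom A hr a (Ideal.Quotient.mk 𝓘 X) = (↑(unitX A hr ^ a) : 𝓡) := by
  rw [powHom_mk, aeval_X]

theorem powHom_natCast_mk (hr : r ≠ 0) (n : ℕ) (p : A[X]) :
    powHom A hr n (Ideal.Quotient.mk 𝓘 p) = Ideal.Quotient.mk 𝓘 (expand A n p) := by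
  rw [powHom_mk, zpow_natCast, Units.val_pow_eq_pow_val, val_unitX, ← expand_aeval,
    ← Ideal.Quotient.mkₐ_eq_mk A, aeval_algHom_apply, aeval_X_left_apply]

theorem powHom_val_unitX_zpow (hr : r ≠ 0) (a b : ℤ) :
    powHom A hr a (↑(unitX A hr ^ b) : 𝓡) = (↑(unitX A hr ^ (a * b)) : 𝓡) := by
  have h_unitX : Units.map (powHom A hr a : 𝓡 →* 𝓡) (unitX A hr) = unitX A hr ^ a :=
    Units.ext (powHom_mk_X hr a)
  calc powHom A hr a (↑(unitX A hr ^ b) : 𝓡)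
      = (Units.map (powHom A hr a : 𝓡 →* 𝓡) (unitX A hr ^ b) : 𝓡) := rfl
    _ = _ := by rw [map_zpow, h_unitX, zpow_mul]

theorem powHom_congr (hr : r ≠ 0) {a b : ℤ} (h : a ≡ b [ZMOD r]) :
    powHom A hr a = powHom A hr b := by
  simp only [powHom, unitX_zpow_congr hr h]

theorem powHom_comp_eq_id (hr : r ≠ 0) {a b : ℤ} (h : a * b ≡ 1 [ZMOD r]) :
    (powHom A hr a).comp (powHom A hr b) = AlgHom.id A 𝓡 := by
  refine Ideal.Quotient.algHom_ext _ (algHom_ext ?_)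
  simp only [AlgHom.comp_apply, Ideal.Quotient.mkₐ_eq_mk, powHom_mk_X, powHom_val_unitX_zpow,
    unitX_zpow_congr hr h, zpow_one, val_unitX, AlgHom.id_apply]

variable (A) in
def powEquiv (hr : r ≠ 0) {a b : ℤ} (h : a * b ≡ 1 [ZMOD r]) : 𝓡 ≃ₐ[A] 𝓡 :=
  AlgEquiv.ofAlgHom (powHom A hr a) (powHom A hr b) (powHom_comp_eq_id hr h)
    (powHom_comp_eq_id hr (by rwa [mul_comm]))

theorem mk_dvd_powHom_mk (hr : r ≠ 0) {p : A[X]} (hp : ∀ n : ℕ, n.Coprime r → p ∣ expand A n p)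
    {a : ℤ} (ha : IsCoprime a r) :
    Ideal.Quotient.mk 𝓘 p ∣ powHom A hr a (Ideal.Quotient.mk 𝓘 p) := by
  obtain ⟨n, hn, hna⟩ := Int.exists_natCast_coprime_modEq ha hr
  rw [← powHom_congr hr hna, powHom_natCast_mk]
  exact map_dvd _ (hp n hn)

theorem map_powEquiv_span_mk (hr : r ≠ 0) {p : A[X]}
    (hp : ∀ n : ℕ, n.Coprime r → p ∣ expand A n p) {a b : ℤ} (h : a * b ≡ 1 [ZMOD r]) :
    (Ideal.span {Ideal.Quotient.mk 𝓘 p}).map ((powEquiv A hr h).toRingEquiv : 𝓡 →+* 𝓡) =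
      Ideal.span {Ideal.Quotient.mk 𝓘 p} := by
  have h_symm : b * a ≡ 1 [ZMOD r] := by rwa [mul_comm]
  exact Ideal.map_eq_self_of_map_le _
    (Ideal.map_span_singleton_le_self _
      (mk_dvd_powHom_mk hr hp (Int.isCoprime_of_mul_modEq_one h)))
    (Ideal.map_span_singleton_le_self _
      (mk_dvd_powHom_mk hr hp (Int.isCoprime_of_mul_modEq_one h_symm)))

end XPowSubOne

/-- For `a` an integer coprime to `r`, the ring endomorphism
of `ℤ[X]/(X^r − 1)` induced by `X ↦ X^a` (note `X` is a unit there) is an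
automorphism, and it maps the ideal generated by `Ψ_r(X)` onto itself. -/
theorem stmt_14 (r : ℕ) (hr : 0 < r) (a : ℤ) (ha : Int.gcd a r = 1) :
    let R := ℤ[X] ⧸ Ideal.span {(X : ℤ[X]) ^ r - 1}
    let mk : ℤ[X] →+* R := Ideal.Quotient.mk (Ideal.span {(X : ℤ[X]) ^ r - 1})
    ∃ (u : Rˣ) (σ : R ≃+* R),
      (u : R) = mk X ∧
      σ (mk X) = ((u ^ a : Rˣ) : R) ∧
      Ideal.map (σ : R →+* R) (Ideal.span {mk (PsiPoly r)}) =
        Ideal.span {mk (PsiPoly r)} := by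
  intro R mk
  obtain ⟨b, k, hbk⟩ := Int.isCoprime_iff_gcd_eq_one.2 ha
  have hab : a * b ≡ 1 [ZMOD r] := Int.modEq_iff_dvd.2 ⟨k, by linear_combination -hbk⟩
  exact ⟨XPowSubOne.unitX ℤ hr.ne', (XPowSubOne.powEquiv ℤ hr.ne' hab).toRingEquiv, rfl,
    XPowSubOne.powHom_mk_X hr.ne' a,
    XPowSubOne.map_powEquiv_span_mk hr.ne' (fun n hn => psiPoly_dvd_expand hr hn) hab⟩

end
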